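/- arXiv:2010.09243 — 4 statements merged into one kernel-verified Lean document; each statement's English description precedes it below -/
import Mathlib

section
/- Let (G, M) and (H, N) be good admissible cocycles over the same data (K, ι, ξ, F). For all i, j write a_{i0}, a_{i1} for the (1,1) and (2,1) entries of M i and g_{ij,11}, g_{ij,21} for the (1,1) and (2,1) entries of G i j, and define G~ i j := a_{i1}⁻¹ · ((a_{i1}·g_{ij,11} − a_{i0}·g_{ij,21})·Id + g_{ij,21}·(N i)) · (H i j). Then: every G~ i j is invertible with det(G~ i j) = a_{j1}·det(G i j)·det(H i j) / (a_{i1} · ξ i j); G~ i i = Id; (G~ i j)·(G~ j k) = G~ i k for all i, j, k; and N j = (ξ i j)·(G~ i j)⁻¹·(N i)·(G~ i j) for all i, j. That is, (G~, N) is again an admissible cocycle. -/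
/-- The combinatorial data underlying admissible pairs on a double cover: a field `K`,
an index type `ι`, transition scalars `ξ i j` (nonzero, normalized, cocycle) and local
equations `F i` of the branch locus (transforming by `ξ²`, not squares in `K`). -/
structure AdmissibleData (K : Type*) [Field K] (ι : Type*) where
  ξ : ι → ι → K
  F : ι → K
  ξ_ne : ∀ i j, ξ i j ≠ 0
  ξ_diag : ∀ i, ξ i i = 1
  ξ_mul : ∀ i j k, ξ i j * ξ j k = ξ i k
  F_transf : ∀ i j, F j = (ξ i j) ^ 2 * F i
  F_not_sq : ∀ i, ¬ ∃ c : K, c ^ 2 = F i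

/-- An admissible cocycle over the data `D`: transition matrices `G i j` (invertible,
normalized, cocycle) together with trace-zero matrices `M i` squaring to `F i • Id` and
transforming by `M j = ξ i j • ((G i j)⁻¹ * M i * G i j)`. -/
structure AdmissibleCocycle {K : Type*} [Field K] {ι : Type*} (D : AdmissibleData K ι) where
  G : ι → ι → Matrix (Fin 2) (Fin 2) K
  M : ι → Matrix (Fin 2) (Fin 2) K
  G_unit : ∀ i j, IsUnit (G i j)
  G_diag : ∀ i, G i i = 1
  G_mul : ∀ i j k, G i j * G j k = G i k
  M_trace : ∀ i, (M i).trace = 0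
  M_sq : ∀ i, M i * M i = D.F i • (1 : Matrix (Fin 2) (Fin 2) K)
  M_transf : ∀ i j, M j = D.ξ i j • ((G i j)⁻¹ * M i * G i j)

/-- A cocycle is good if every `(2,1)` entry of `M i` is nonzero. -/
def AdmissibleCocycle.Good {K : Type*} [Field K] {ι : Type*} {D : AdmissibleData K ι}
    (C : AdmissibleCocycle D) : Prop := ∀ i, C.M i 1 0 ≠ 0

/-!
Let `e₀ = (1, 0)` and `P_{ij}(t) = (a_{i1} g_{ij,11} − a_{i0} g_{ij,21}) + g_{ij,21} t`, so that
`G~ i j = a_{i1}⁻¹ P_{ij}(N i) H i j`. Since `a_{i1} ≠ 0`, `e₀` is a cyclic vector of `M i`: the map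
`x • 1 + y • M i ↦ (x • 1 + y • M i) e₀` is injective, and `K[M i]` and `K[N i]` are both copies of
`K[t]/(t² − F i)`. The polynomial `P_{ij}` is characterised by `P_{ij}(M i) e₀ = a_{i1} G_{ij} e₀`,
and `G_{ij} M_j = ξ_{ij} M_i G_{ij}` turns this into `P_{ij}(t) P_{jk}(ξ_{ij} t) = a_{j1} P_{ik}(t)`
in `K[M i]`, hence in `K[N i]`; with the same relation for `H` this is the cocycle identity for
`G~`. For the determinant, evaluate `det (v, M_i v)` at `v = P_{ij}(M i) e₀ = a_{i1} G_{ij} e₀` in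
two ways: it is `det P_{ij}(M i) · a_{i1}` and also `a_{i1}² ξ_{ij}⁻¹ det G_{ij} · a_{j1}`.
-/

section

open Matrix

variable {K : Type*} [Field K]

section LinearPolynomials

variable {A B : Matrix (Fin 2) (Fin 2) K} {F : K}

lemma smul_one_add_smul_mul_smul_one_add_smul (hA : A * A = F • 1) (x y x' y' : K) :
    (x • (1 : Matrix (Fin 2) (Fin 2) K) + y • A) * (x' • 1 + y' • A) =
      (x * x' + y * y' * F) • 1 + (x * y' + x' * y) • A := by
  simp only [add_mul, mul_add, Matrix.smul_mul, Matrix.mul_smul, Matrix.one_mul, Matrix.mul_one, hA,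
    smul_smul]
  module

lemma commute_smul_one_add_smul_self (A : Matrix (Fin 2) (Fin 2) K) (x y : K) :
    Commute (x • (1 : Matrix (Fin 2) (Fin 2) K) + y • A) A :=
  ((Commute.one_left A).smul_left x).add_left ((Commute.refl A).smul_left y)

lemma commute_smul_one_add_smul (A : Matrix (Fin 2) (Fin 2) K) (x y x' y' : K) :
    Commute (x • (1 : Matrix (Fin 2) (Fin 2) K) + y • A) (x' • 1 + y' • A) :=
  ((Commute.one_right _).smul_right x').add_right
    ((commute_smul_one_add_smul_self A x y).smul_right y')

lemma det_smul_one_add_smul (hA₀ : A.trace = 0) (hA : A * A = F • 1) (x y : K) :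
    (x • (1 : Matrix (Fin 2) (Fin 2) K) + y • A).det = x ^ 2 - y ^ 2 * F := by
  have h₀₀ := congrFun (congrFun hA 0) 0
  rw [trace_fin_two] at hA₀
  simp only [mul_apply, Fin.sum_univ_two, Matrix.smul_apply, one_apply_eq, smul_eq_mul,
    mul_one] at h₀₀
  simp only [det_fin_two, Matrix.add_apply, Matrix.smul_apply, one_apply_eq, one_apply_ne,
    smul_eq_mul, mul_one, mul_zero, zero_add, ne_eq, zero_ne_one, one_ne_zero, not_false_eq_true]
  linear_combination (x * y + y ^ 2 * A 0 0) * hA₀ - y ^ 2 * h₀₀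

lemma eq_of_smul_one_add_smul_mulVec_single_eq (hA : A 1 0 ≠ 0) {x y x' y' : K}
    (h : (x • (1 : Matrix (Fin 2) (Fin 2) K) + y • A) *ᵥ Pi.single 0 1 =
      (x' • 1 + y' • A) *ᵥ Pi.single 0 1) :
    x = x' ∧ y = y' := by
  have h₀ := congrFun h 0
  have h₁ := congrFun h 1
  simp only [mulVec_single, MulOpposite.op_one, one_smul, col_apply, Matrix.add_apply,
    Matrix.smul_apply, one_apply_eq, one_apply_ne, smul_eq_mul, mul_one, mul_zero, zero_add, ne_eq,
    one_ne_zero, not_false_eq_true, mul_eq_mul_right_iff] at h₀ h₁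
  obtain rfl := h₁.resolve_right hA
  exact ⟨by linear_combination h₀, rfl⟩

lemma smul_one_add_smul_mul_eq_of_mulVec_single_eq (hA₁₀ : A 1 0 ≠ 0) (hA : A * A = F • 1)
    (hB : B * B = F • 1) {x y x' y' u v : K}
    (h : ((x • 1 + y • A) * (x' • 1 + y' • A)) *ᵥ Pi.single 0 1 =
      (u • 1 + v • A) *ᵥ Pi.single 0 1) :
    (x • 1 + y • B) * (x' • 1 + y' • B) = u • 1 + v • B := by
  rw [smul_one_add_smul_mul_smul_one_add_smul hA] at h
  obtain ⟨rfl, rfl⟩ := eq_of_smul_one_add_smul_mulVec_single_eq hA₁₀ h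
  exact smul_one_add_smul_mul_smul_one_add_smul hB _ _ _ _

end LinearPolynomials

lemma eq_smul_inv_mul_mul_of_mul_eq_smul_mul {R n : Type*} [CommRing R] [Fintype n] [DecidableEq n]
    {X A B : Matrix n n R} {c : R} (hX : IsUnit X) (h : X * B = c • (A * X)) :
    B = c • (X⁻¹ * A * X) := by
  calc B = X⁻¹ * (X * B) := by
        rw [← Matrix.mul_assoc, nonsing_inv_mul _ ((isUnit_iff_isUnit_det X).mp hX), Matrix.one_mul]
    _ = c • (X⁻¹ * A * X) := by rw [h, Matrix.mul_smul, Matrix.mul_assoc]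

lemma det_of_mulVec {n : Type*} [Fintype n] [DecidableEq n] (X : Matrix n n K) (v : n → n → K) :
    (of fun r => X *ᵥ v r).det = X.det * (of v).det := by
  have : (of fun r => X *ᵥ v r) = of v * Xᵀ := by
    ext r c; simp [mul_apply, mulVec, dotProduct, mul_comm]
  rw [this, det_mul, det_transpose, mul_comm]

namespace AdmissibleCocycle

variable {ι : Type*} {D : AdmissibleData K ι} (C : AdmissibleCocycle D)

lemma G_mul_M (i j : ι) : C.G i j * C.M j = D.ξ i j • (C.M i * C.G i j) := by
  have hu : IsUnit (C.G i j).det := (isUnit_iff_isUnit_det _).mp (C.G_unit i j)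
  rw [C.M_transf i j, Matrix.mul_smul, ← Matrix.mul_assoc, ← Matrix.mul_assoc,
    mul_nonsing_inv _ hu, Matrix.one_mul]

lemma G_mul_smul_one_add_smul (i j : ι) (x y : K) :
    C.G i j * (x • 1 + y • C.M j) = (x • 1 + (D.ξ i j * y) • C.M i) * C.G i j := by
  rw [Matrix.mul_add, Matrix.add_mul, Matrix.mul_smul, Matrix.mul_smul, G_mul_M, Matrix.mul_one,
    Matrix.smul_mul, Matrix.smul_mul, Matrix.one_mul, smul_smul, mul_comm y]

def polyConst (i j : ι) : K := C.M i 1 0 * C.G i j 0 0 - C.M i 0 0 * C.G i j 1 0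

def transitionPoly (N : Matrix (Fin 2) (Fin 2) K) (i j : ι) : Matrix (Fin 2) (Fin 2) K :=
  C.polyConst i j • 1 + C.G i j 1 0 • N

lemma commute_transitionPoly (N : Matrix (Fin 2) (Fin 2) K) (i j : ι) :
    Commute (C.transitionPoly N i j) N :=
  commute_smul_one_add_smul_self _ _ _

lemma transitionPoly_M_mulVec_single (i j : ι) :
    C.transitionPoly (C.M i) i j *ᵥ Pi.single 0 1 = C.M i 1 0 • (C.G i j *ᵥ Pi.single 0 1) := by
  ext r
  fin_cases r <;> simp [transitionPoly, polyConst] <;> ring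

lemma transitionPoly_mul {i : ι} (hi : C.M i 1 0 ≠ 0) {N : Matrix (Fin 2) (Fin 2) K}
    (hN : N * N = D.F i • 1) (j k : ι) :
    C.transitionPoly N i j * (C.polyConst j k • 1 + (D.ξ i j * C.G j k 1 0) • N) =
      C.M j 1 0 • C.transitionPoly N i k := by
  rw [transitionPoly, transitionPoly, smul_add, smul_smul, smul_smul]
  refine smul_one_add_smul_mul_eq_of_mulVec_single_eq hi (C.M_sq i) hN ?_
  set e : Fin 2 → K := Pi.single 0 1
  set Q := C.polyConst j k • (1 : Matrix (Fin 2) (Fin 2) K) + (D.ξ i j * C.G j k 1 0) • C.M i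
  have hQ : Commute (C.transitionPoly (C.M i) i j) Q := commute_smul_one_add_smul _ _ _ _ _
  calc (C.transitionPoly (C.M i) i j * Q) *ᵥ e
      = Q *ᵥ (C.transitionPoly (C.M i) i j *ᵥ e) := by rw [hQ.eq, mulVec_mulVec]
    _ = C.M i 1 0 • (C.G i j *ᵥ (C.transitionPoly (C.M j) j k *ᵥ e)) := by
        rw [transitionPoly_M_mulVec_single, mulVec_smul, mulVec_mulVec, mulVec_mulVec,
          transitionPoly, G_mul_smul_one_add_smul]
    _ = (C.M j 1 0 * C.M i 1 0) • (C.G i k *ᵥ e) := by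
        rw [transitionPoly_M_mulVec_single, mulVec_smul, mulVec_mulVec, G_mul, smul_smul, mul_comm]
    _ = _ := by
        rw [← smul_smul, ← transitionPoly_M_mulVec_single, ← smul_mulVec, transitionPoly, smul_add,
          smul_smul, smul_smul]

lemma det_transitionPoly_mul_ξ {i : ι} (hi : C.M i 1 0 ≠ 0) {N : Matrix (Fin 2) (Fin 2) K}
    (hN₀ : N.trace = 0) (hN : N * N = D.F i • 1) (j : ι) :
    (C.transitionPoly N i j).det * D.ξ i j = C.M i 1 0 * C.M j 1 0 * (C.G i j).det := by
  have hdet : (C.transitionPoly N i j).det = (C.transitionPoly (C.M i) i j).det := by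
    rw [transitionPoly, transitionPoly, det_smul_one_add_smul hN₀ hN,
      det_smul_one_add_smul (C.M_trace i) (C.M_sq i)]
  set P := C.transitionPoly (C.M i) i j
  set e : Fin 2 → K := Pi.single 0 1
  have hrows : (of fun r => P *ᵥ ![e, D.ξ i j • C.M i *ᵥ e] r) =
      of fun r => C.G i j *ᵥ ![C.M i 1 0 • e, C.M i 1 0 • C.M j *ᵥ e] r := by
    ext r : 1
    fin_cases r
    · simp only [Fin.zero_eta, Matrix.cons_val_zero, of_apply]
      rw [transitionPoly_M_mulVec_single, mulVec_smul]
    · simp only [Fin.mk_one, Matrix.cons_val_one, Matrix.cons_val_zero, of_apply]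
      rw [mulVec_smul, mulVec_mulVec, (C.commute_transitionPoly _ i j).eq, ← mulVec_mulVec,
        transitionPoly_M_mulVec_single, mulVec_smul, mulVec_mulVec, smul_comm, ← smul_mulVec,
        ← G_mul_M, ← mulVec_mulVec, mulVec_smul]
  have hL : (of ![e, D.ξ i j • C.M i *ᵥ e]).det = D.ξ i j * C.M i 1 0 := by
    simp [det_fin_two, e]
  have hR : (of ![C.M i 1 0 • e, C.M i 1 0 • C.M j *ᵥ e]).det = C.M i 1 0 ^ 2 * C.M j 1 0 := by
    simp [det_fin_two, e]
    ring
  have h := congrArg det hrows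
  rw [det_of_mulVec, det_of_mulVec, hL, hR] at h
  apply mul_left_cancel₀ hi
  rw [hdet]
  linear_combination h

end AdmissibleCocycle

section TensorTransition

variable {ι : Type*} {D : AdmissibleData K ι} {C₁ C₂ : AdmissibleCocycle D}

def tensorTransition (C₁ C₂ : AdmissibleCocycle D) (i j : ι) : Matrix (Fin 2) (Fin 2) K :=
  (C₁.M i 1 0)⁻¹ • (C₁.transitionPoly (C₂.M i) i j * C₂.G i j)

lemma det_tensorTransition (h₁ : C₁.Good) (i j : ι) :
    (tensorTransition C₁ C₂ i j).det =
      C₁.M j 1 0 * (C₁.G i j).det * (C₂.G i j).det / (C₁.M i 1 0 * D.ξ i j) := by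
  have h := C₁.det_transitionPoly_mul_ξ (h₁ i) (C₂.M_trace i) (C₂.M_sq i) j
  have hi := h₁ i
  have hξ := D.ξ_ne i j
  rw [tensorTransition, det_smul, det_mul, Fintype.card_fin]
  field_simp
  linear_combination (C₂.G i j).det * h

lemma isUnit_tensorTransition (h₁ : C₁.Good) (i j : ι) : IsUnit (tensorTransition C₁ C₂ i j) := by
  have hG₁ := ((isUnit_iff_isUnit_det _).mp (C₁.G_unit i j)).ne_zero
  have hG₂ := ((isUnit_iff_isUnit_det _).mp (C₂.G_unit i j)).ne_zero
  rw [isUnit_iff_isUnit_det, det_tensorTransition h₁, isUnit_iff_ne_zero]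
  exact div_ne_zero (mul_ne_zero (mul_ne_zero (h₁ j) hG₁) hG₂) (mul_ne_zero (h₁ i) (D.ξ_ne i j))

lemma tensorTransition_self (h₁ : C₁.Good) (i : ι) : tensorTransition C₁ C₂ i i = 1 := by
  simp [tensorTransition, AdmissibleCocycle.transitionPoly, AdmissibleCocycle.polyConst,
    C₁.G_diag, C₂.G_diag, smul_smul, inv_mul_cancel₀ (h₁ i)]

lemma tensorTransition_mul (h₁ : C₁.Good) (i j k : ι) :
    tensorTransition C₁ C₂ i j * tensorTransition C₁ C₂ j k = tensorTransition C₁ C₂ i k := by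
  have hP := C₁.transitionPoly_mul (h₁ i) (C₂.M_sq i) j k
  have hH : C₂.G i j * C₁.transitionPoly (C₂.M j) j k =
      (C₁.polyConst j k • 1 + (D.ξ i j * C₁.G j k 1 0) • C₂.M i) * C₂.G i j :=
    C₂.G_mul_smul_one_add_smul i j _ _
  calc tensorTransition C₁ C₂ i j * tensorTransition C₁ C₂ j k
      = ((C₁.M j 1 0)⁻¹ * (C₁.M i 1 0)⁻¹) • (C₁.transitionPoly (C₂.M i) i j *
          (C₂.G i j * C₁.transitionPoly (C₂.M j) j k) * C₂.G j k) := by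
        simp only [tensorTransition, Matrix.smul_mul, Matrix.mul_smul, smul_smul, Matrix.mul_assoc]
    _ = ((C₁.M j 1 0)⁻¹ * (C₁.M i 1 0)⁻¹) •
          ((C₁.M j 1 0 • C₁.transitionPoly (C₂.M i) i k) * C₂.G i k) := by
        rw [hH, ← Matrix.mul_assoc, hP, Matrix.mul_assoc, C₂.G_mul]
    _ = tensorTransition C₁ C₂ i k := by
        rw [Matrix.smul_mul, smul_smul, mul_right_comm, inv_mul_cancel₀ (h₁ j), one_mul]
        rfl

lemma tensorTransition_mul_M (i j : ι) :
    tensorTransition C₁ C₂ i j * C₂.M j = D.ξ i j • (C₂.M i * tensorTransition C₁ C₂ i j) := by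
  rw [tensorTransition, Matrix.smul_mul, Matrix.mul_assoc, C₂.G_mul_M, Matrix.mul_smul,
    ← Matrix.mul_assoc, (C₁.commute_transitionPoly _ i j).eq, Matrix.mul_assoc,
    Matrix.mul_smul, smul_comm]

end TensorTransition

end

theorem stmt4_general {K : Type*} [Field K] {ι : Type*} (D : AdmissibleData K ι)
    (C₁ C₂ : AdmissibleCocycle D) (h₁ : C₁.Good)
    (Gt : ι → ι → Matrix (Fin 2) (Fin 2) K)
    (hGt : ∀ i j, Gt i j =
      (C₁.M i 1 0)⁻¹ •
        (((C₁.M i 1 0 * C₁.G i j 0 0 - C₁.M i 0 0 * C₁.G i j 1 0) •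
              (1 : Matrix (Fin 2) (Fin 2) K) +
            (C₁.G i j 1 0) • C₂.M i) * C₂.G i j)) :
    (∀ i j, IsUnit (Gt i j)) ∧
    (∀ i j, (Gt i j).det =
      C₁.M j 1 0 * (C₁.G i j).det * (C₂.G i j).det / (C₁.M i 1 0 * D.ξ i j)) ∧
    (∀ i, Gt i i = 1) ∧
    (∀ i j k, Gt i j * Gt j k = Gt i k) ∧
    (∀ i j, C₂.M j = D.ξ i j • ((Gt i j)⁻¹ * C₂.M i * Gt i j)) := by
  obtain rfl : Gt = tensorTransition C₁ C₂ := funext₂ hGt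
  exact ⟨isUnit_tensorTransition h₁, det_tensorTransition h₁, tensorTransition_self h₁,
    tensorTransition_mul h₁, fun i j => eq_smul_inv_mul_mul_of_mul_eq_smul_mul
      (isUnit_tensorTransition h₁ i j) (tensorTransition_mul_M i j)⟩

/-- tensor product of two admissible cocycles.  Given good admissible
cocycles `(G, M)` and `(H, N)` over the same data, the matrices
`G~ i j := a_{i1}⁻¹ • ((a_{i1}·g_{ij,11} − a_{i0}·g_{ij,21}) • Id + g_{ij,21} • N i) * H i j`
are invertible with the stated determinant, form a normalized cocycle, and intertwine `N`,
i.e. `(G~, N)` is again an admissible cocycle. -/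
theorem stmt4 {K : Type*} [Field K] {ι : Type*} (D : AdmissibleData K ι)
    (C₁ C₂ : AdmissibleCocycle D) (h₁ : C₁.Good) (h₂ : C₂.Good)
    (Gt : ι → ι → Matrix (Fin 2) (Fin 2) K)
    (hGt : ∀ i j, Gt i j =
      (C₁.M i 1 0)⁻¹ •
        (((C₁.M i 1 0 * C₁.G i j 0 0 - C₁.M i 0 0 * C₁.G i j 1 0) •
              (1 : Matrix (Fin 2) (Fin 2) K) +
            (C₁.G i j 1 0) • C₂.M i) * C₂.G i j)) :
    (∀ i j, IsUnit (Gt i j)) ∧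
    (∀ i j, (Gt i j).det =
      C₁.M j 1 0 * (C₁.G i j).det * (C₂.G i j).det / (C₁.M i 1 0 * D.ξ i j)) ∧
    (∀ i, Gt i i = 1) ∧
    (∀ i j k, Gt i j * Gt j k = Gt i k) ∧
    (∀ i j, C₂.M j = D.ξ i j • ((Gt i j)⁻¹ * C₂.M i * Gt i j)) :=
  stmt4_general D C₁ C₂ h₁ Gt hGt
end

section
/- Let K be a field, ξ a nonzero element of K, F ∈ K and F′ := ξ²·F. Let G be an invertible 2×2 matrix over K, let a₀, a₁, a₂ ∈ K with a₀² + a₁·a₂ = F and a₁ ≠ 0, set M := [[a₀, a₂],[a₁, −a₀]] and M′ := ξ·G⁻¹·M·G, and write b₀, b₂, b₁ for the (1,1), (1,2) and (2,1) entries of M′ (so M′ = [[b₀, b₂],[b₁, −b₀]]); assume b₁ ≠ 0. Given x, y ∈ K, define x′, y′ ∈ K by the equation (x′ + b₀·y′, b₁·y′)ᵗ = G⁻¹·(x + a₀·y, a₁·y)ᵗ (i.e. y′ is b₁⁻¹ times the second component of G⁻¹·(x + a₀·y, a₁·y)ᵗ and x′ is the first component minus b₀·y′). Then (det G / ξ)·b₁·(x′²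 − y′²·F′) = a₁·(x² − y²·F). -/
/-!
With `v := (x + a₀ y, a₁ y)`, both sides are values of the binary quadratic form
`v ↦ det (v, N v)` attached to a traceless `2 × 2` matrix `N`: for `N = !![n₀, n₂; n₁, -n₀]` it
sends `(x + n₀ y, n₁ y)` to `n₁ (x² + y² det N)`. The left side is this form for `M′` at
`G⁻¹ v`, the right side the form for `M` at `v`; conjugating by `G⁻¹` multiplies the form by
`det G⁻¹` and scaling by `ξ` multiplies it by `ξ`, while `det M′ = ξ² det M = -ξ² F`.
-/

namespace Matrix

variable {R : Type*} [CommRing R]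

theorem det_of_mulVec {n : Type*} [Fintype n] [DecidableEq n] (A : Matrix n n R)
    (w : n → n → R) : (Matrix.of fun i => A *ᵥ w i).det = A.det * (Matrix.of w).det := by
  have hrows : (Matrix.of fun i => A *ᵥ w i) = Matrix.of w * Aᵀ := by
    ext i j
    simp only [of_apply, mulVec, dotProduct, mul_apply, transpose_apply, mul_comm]
  rw [hrows, det_mul, det_transpose, mul_comm]

def wedgeForm (N : Matrix (Fin 2) (Fin 2) R) (v : Fin 2 → R) : R :=
  (Matrix.of ![v, N *ᵥ v]).det

theorem wedgeForm_smul (c : R) (N : Matrix (Fin 2) (Fin 2) R) (v : Fin 2 → R) :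
    wedgeForm (c • N) v = c * wedgeForm N v := by
  simp [wedgeForm, det_fin_two]
  ring

theorem wedgeForm_conj {A : Matrix (Fin 2) (Fin 2) R} (hA : IsUnit A.det)
    (N : Matrix (Fin 2) (Fin 2) R) (v : Fin 2 → R) :
    wedgeForm (A⁻¹ * N * A) (A⁻¹ *ᵥ v) = A⁻¹.det * wedgeForm N v := by
  have hNv : (A⁻¹ * N * A) *ᵥ (A⁻¹ *ᵥ v) = A⁻¹ *ᵥ (N *ᵥ v) := by
    rw [mulVec_mulVec, Matrix.mul_assoc, Matrix.mul_assoc, mul_nonsing_inv A hA, Matrix.mul_one,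
      ← mulVec_mulVec]
  have hrows : Matrix.of ![A⁻¹ *ᵥ v, A⁻¹ *ᵥ (N *ᵥ v)] =
      Matrix.of fun i => A⁻¹ *ᵥ ![v, N *ᵥ v] i := by
    ext i; fin_cases i <;> rfl
  rw [wedgeForm, hNv, hrows, det_of_mulVec, wedgeForm]

theorem wedgeForm_of_trace_eq_zero {N : Matrix (Fin 2) (Fin 2) R} (hN : N.trace = 0) (x y : R) :
    wedgeForm N ![x + N 0 0 * y, N 1 0 * y] = N 1 0 * (x ^ 2 + y ^ 2 * N.det) := by
  rw [trace_fin_two] at hN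
  have hN11 : N 1 1 = -N 0 0 := eq_neg_of_add_eq_zero_right hN
  simp [wedgeForm, det_fin_two, hN11]
  ring

end Matrix

open Matrix

theorem stmt6_general {K : Type*} [Field K] (ξ F : K) (hξ : ξ ≠ 0)
    (G : Matrix (Fin 2) (Fin 2) K) (hG : IsUnit G.det)
    (a₀ a₁ a₂ : K) (hF : a₀ ^ 2 + a₁ * a₂ = F)
    (M M' : Matrix (Fin 2) (Fin 2) K)
    (hM : M = !![a₀, a₂; a₁, -a₀]) (hM' : M' = ξ • (G⁻¹ * M * G))
    (hb₁ : M' 1 0 ≠ 0)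
    (x y x' y' : K)
    (hy' : y' = (M' 1 0)⁻¹ * (G⁻¹.mulVec ![x + a₀ * y, a₁ * y] 1))
    (hx' : x' = G⁻¹.mulVec ![x + a₀ * y, a₁ * y] 0 - M' 0 0 * y') :
    (G.det / ξ) * M' 1 0 * (x' ^ 2 - y' ^ 2 * (ξ ^ 2 * F)) = a₁ * (x ^ 2 - y ^ 2 * F) := by
  set v : Fin 2 → K := ![x + a₀ * y, a₁ * y]
  have hM_tr : M.trace = 0 := by simp [hM, trace_fin_two]
  have hM_det : M.det = -F := by rw [hM, det_fin_two_of, ← hF]; ring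
  have hM'_tr : M'.trace = 0 := by
    rw [hM', trace_smul, trace_mul_comm, ← Matrix.mul_assoc, mul_nonsing_inv G hG, Matrix.one_mul,
      hM_tr, smul_zero]
  have hM'_det : M'.det = -(ξ ^ 2 * F) := by
    rw [hM', det_smul, det_conj' ((isUnit_iff_isUnit_det G).mpr hG), hM_det]; simp
  have hu : G⁻¹ *ᵥ v = ![x' + M' 0 0 * y', M' 1 0 * y'] := by
    ext i; fin_cases i <;> simp [hx', hy', hb₁]
  calc G.det / ξ * M' 1 0 * (x' ^ 2 - y' ^ 2 * (ξ ^ 2 * F))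
      = G.det / ξ * wedgeForm M' (G⁻¹ *ᵥ v) := by
        rw [hu, wedgeForm_of_trace_eq_zero hM'_tr, hM'_det]; ring
    _ = wedgeForm M v := by
        rw [hM', wedgeForm_smul, wedgeForm_conj hG, det_nonsing_inv, Ring.inverse_eq_inv']
        field_simp [hG.ne_zero]
    _ = a₁ * (x ^ 2 - y ^ 2 * F) := by
        have hM₀₀ : M 0 0 = a₀ := by simp [hM]
        have hM₁₀ : M 1 0 = a₁ := by simp [hM]
        have hform := wedgeForm_of_trace_eq_zero hM_tr x y
        rw [hM₀₀, hM₁₀, hM_det] at hform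
        rw [hform]; ring

/-- gluing identity for global sections.  Over a field `K`, with `ξ ≠ 0`,
`F′ := ξ²·F`, `G` invertible, `M := !![a₀, a₂; a₁, -a₀]` with `a₀² + a₁a₂ = F` and `a₁ ≠ 0`,
`M′ := ξ • (G⁻¹ * M * G)` with entries `b₀ = M′₁₁`, `b₂ = M′₁₂`, `b₁ = M′₂₁ ≠ 0`, and
`x′, y′` defined by `(x′ + b₀·y′, b₁·y′)ᵗ = G⁻¹·(x + a₀·y, a₁·y)ᵗ`, one has
`(det G / ξ)·b₁·(x′² − y′²·F′) = a₁·(x² − y²·F)`. -/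
theorem stmt6 {K : Type*} [Field K] (ξ F : K) (hξ : ξ ≠ 0)
    (G : Matrix (Fin 2) (Fin 2) K) (hG : IsUnit G.det)
    (a₀ a₁ a₂ : K) (hF : a₀ ^ 2 + a₁ * a₂ = F) (ha₁ : a₁ ≠ 0)
    (M M' : Matrix (Fin 2) (Fin 2) K)
    (hM : M = !![a₀, a₂; a₁, -a₀]) (hM' : M' = ξ • (G⁻¹ * M * G))
    (hb₁ : M' 1 0 ≠ 0)
    (x y x' y' : K)
    (hy' : y' = (M' 1 0)⁻¹ * (G⁻¹.mulVec ![x + a₀ * y, a₁ * y] 1))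
    (hx' : x' = G⁻¹.mulVec ![x + a₀ * y, a₁ * y] 0 - M' 0 0 * y') :
    (G.det / ξ) * M' 1 0 * (x' ^ 2 - y' ^ 2 * (ξ ^ 2 * F)) = a₁ * (x ^ 2 - y ^ 2 * F) :=
  stmt6_general ξ F hξ G hG a₀ a₁ a₂ hF M M' hM hM' hb₁ x y x' y' hy' hx'
end

section
/- Let K := ℂ(x) be the field of rational functions over ℂ in the variable x, let ℂ[x] ⊂ K be the subring of polynomials, ℂ[x⁻¹] ⊂ K the subring of polynomials in x⁻¹, and ℂ[x, x⁻¹] ⊂ K the subring of Laurent polynomials. Let G be an invertible 2×2 matrix over K such that all entries of G and of G⁻¹ lie in ℂ[x, x⁻¹]. Then there exist 2×2 matrices A, B over K and integers e₁, e₂ such that all entries of A lie in ℂ[x] and det A is a nonzero constant, all entries of B lie in ℂ[x⁻¹] and det B is a nonzero constant, and A⁻¹·G·B = [[x^{e₁}, 0],[0, x^{e₂}]]. -/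
/-- `f ∈ ℂ[x] ⊂ ℂ(x)`: `f` is a polynomial in `x`. -/
def MemPolyX (f : RatFunc ℂ) : Prop :=
  ∃ p : Polynomial ℂ, f = algebraMap (Polynomial ℂ) (RatFunc ℂ) p

/-- `f ∈ ℂ[x⁻¹] ⊂ ℂ(x)`: `f` is a polynomial in `x⁻¹`. -/
def MemPolyXInv (f : RatFunc ℂ) : Prop :=
  ∃ p : Polynomial ℂ, f = Polynomial.aeval (RatFunc.X : RatFunc ℂ)⁻¹ p

/-- `f ∈ ℂ[x, x⁻¹] ⊂ ℂ(x)`: `f` is a Laurent polynomial in `x`. -/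
def MemLaurent (f : RatFunc ℂ) : Prop :=
  ∃ (p : Polynomial ℂ) (n : ℕ),
    f = (RatFunc.X : RatFunc ℂ)⁻¹ ^ n * algebraMap (Polynomial ℂ) (RatFunc ℂ) p

/-!
A row operation over `ℂ[x]` given by a Bézout relation between the entries of the first column
makes `G` upper triangular. The diagonal entries then multiply to a unit of `ℂ[x, x⁻¹]`, so they
are monomials `c xᵉ`, and it remains to factor `!![xᵃ, f; 0, xᵇ]`. A column operation over
`ℂ[x⁻¹]` removes the monomials of `f` of degree `≤ a`; what is left, if nonzero, is `xˡ p`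
with `l > a` and `p(0) ≠ 0`. If `l ≥ b`, a row operation over `ℂ[x]` removes it. Otherwise a
Bézout relation `r p + s x^(b-l) = 1` gives a row operation over `ℂ[x]` which, after swapping
the columns, yields `!![xˡ, *; 0, x^(a+b-l)]`; since `|a + b - 2l| < b - a`, induction on
`|b - a|` concludes.
-/
open scoped Polynomial

namespace Matrix

variable {F K : Type*} [Field F] [Field K] [Algebra F K] {n : Type*} [Fintype n]
  {S : Subalgebra F K} {M N : Matrix n n K}

lemma mul_apply_mem_subalgebra (hM : ∀ i j, M i j ∈ S) (hN : ∀ i j, N i j ∈ S) (i j : n) :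
    (M * N) i j ∈ S :=
  Subalgebra.sum_mem _ fun l _ => mul_mem (hM i l) (hN l j)

variable [DecidableEq n]

lemma det_mem_subalgebra (hM : ∀ i j, M i j ∈ S) : M.det ∈ S := by
  have hmap : M = S.val.mapMatrix (Matrix.of fun i j => (⟨M i j, hM i j⟩ : S)) := rfl
  rw [hmap, ← AlgHom.map_det]
  exact Subtype.mem _

lemma adjugate_apply_mem_subalgebra (hM : ∀ i j, M i j ∈ S) (i j : n) :
    M.adjugate i j ∈ S := by
  have hmap : M = S.val.mapMatrix (Matrix.of fun i j => (⟨M i j, hM i j⟩ : S)) := rfl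
  rw [hmap, ← AlgHom.map_adjugate]
  exact Subtype.mem _

def IsConstDetOver (S : Subalgebra F K) (M : Matrix n n K) : Prop :=
  (∀ i j, M i j ∈ S) ∧ ∃ c : F, c ≠ 0 ∧ M.det = algebraMap F K c

namespace IsConstDetOver

lemma one : IsConstDetOver S (1 : Matrix n n K) := by
  refine ⟨fun i j => ?_, 1, one_ne_zero, by simp⟩
  rw [one_apply]
  split_ifs
  exacts [one_mem S, zero_mem S]

lemma mul (hM : IsConstDetOver S M) (hN : IsConstDetOver S N) : IsConstDetOver S (M * N) := by
  obtain ⟨hM, c, hc, hdM⟩ := hM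
  obtain ⟨hN, d, hd, hdN⟩ := hN
  refine ⟨mul_apply_mem_subalgebra hM hN, c * d, mul_ne_zero hc hd, ?_⟩
  rw [det_mul, hdM, hdN, map_mul]

lemma isUnit_det (hM : IsConstDetOver S M) : IsUnit M.det := by
  obtain ⟨-, c, hc, hdM⟩ := hM
  exact hdM ▸ ((map_ne_zero (algebraMap F K)).2 hc).isUnit

lemma inv (hM : IsConstDetOver S M) : IsConstDetOver S M⁻¹ := by
  obtain ⟨hM, c, hc, hdM⟩ := hM
  have hinv : Ring.inverse M.det = algebraMap F K c⁻¹ := by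
    rw [hdM, Ring.inverse_eq_inv', map_inv₀]
  refine ⟨fun i j => ?_, c⁻¹, inv_ne_zero hc, by rw [det_nonsing_inv, hinv]⟩
  rw [inv_def, hinv, smul_apply, smul_eq_mul]
  exact mul_mem (S.algebraMap_mem _) (adjugate_apply_mem_subalgebra hM i j)

end IsConstDetOver

lemma isConstDetOver_fin_two {a b c d : K} (ha : a ∈ S) (hb : b ∈ S) (hc : c ∈ S) (hd : d ∈ S)
    {u : F} (hu : u ≠ 0) (hdet : a * d - b * c = algebraMap F K u) :
    IsConstDetOver S !![a, b; c, d] :=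
  ⟨fun i j => by fin_cases i <;> fin_cases j <;> assumption, u, hu, by rwa [det_fin_two_of]⟩

lemma isConstDetOver_unitriangular {b : K} (hb : b ∈ S) : IsConstDetOver S !![1, b; 0, 1] :=
  isConstDetOver_fin_two (one_mem S) hb (zero_mem S) (one_mem S) one_ne_zero (by simp)

end Matrix

noncomputable section

namespace RatFunc

variable {k : Type*} [Field k]

def polyX : Subalgebra k (RatFunc k) := (Polynomial.aeval X).range

def polyXInv : Subalgebra k (RatFunc k) := (Polynomial.aeval X⁻¹).range

lemma mem_polyX {f : RatFunc k} :
    f ∈ polyX ↔ ∃ p : k[X], algebraMap k[X] (RatFunc k) p = f := by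
  simp [polyX]

lemma algebraMap_mem_polyX (p : k[X]) : algebraMap k[X] (RatFunc k) p ∈ polyX :=
  mem_polyX.2 ⟨p, rfl⟩

lemma aeval_X_inv_mem_polyXInv (p : k[X]) : Polynomial.aeval (X⁻¹ : RatFunc k) p ∈ polyXInv :=
  ⟨p, rfl⟩

lemma X_mem_polyX : (X : RatFunc k) ∈ polyX := ⟨Polynomial.X, by simp⟩

lemma C_mem (S : Subalgebra k (RatFunc k)) (c : k) : C c ∈ S :=
  algebraMap_eq_C (K := k) ▸ S.algebraMap_mem c

def laurentPoly : Subalgebra k (RatFunc k) where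
  carrier := {f | ∃ n : ℕ, X ^ n * f ∈ polyX}
  mul_mem' := by
    rintro f g ⟨m, hf⟩ ⟨n, hg⟩
    exact ⟨m + n, by simpa only [pow_add, mul_mul_mul_comm] using mul_mem hf hg⟩
  add_mem' := by
    rintro f g ⟨m, hf⟩ ⟨n, hg⟩
    refine ⟨m + n, ?_⟩
    have h : X ^ (m + n) * (f + g) = X ^ n * (X ^ m * f) + X ^ m * (X ^ n * g) := by ring
    rw [h]
    exact add_mem (mul_mem (pow_mem X_mem_polyX n) hf) (mul_mem (pow_mem X_mem_polyX m) hg)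
  algebraMap_mem' c := ⟨0, by simpa using polyX.algebraMap_mem c⟩

lemma polyX_le_laurentPoly : (polyX : Subalgebra k (RatFunc k)) ≤ laurentPoly :=
  fun f hf => ⟨0, by simp [hf]⟩

lemma X_inv_mem_laurentPoly : (X⁻¹ : RatFunc k) ∈ laurentPoly :=
  ⟨1, by simp [X_ne_zero]⟩

lemma polyXInv_le_laurentPoly : (polyXInv : Subalgebra k (RatFunc k)) ≤ laurentPoly := by
  rintro _ ⟨p, rfl⟩
  change Polynomial.aeval X⁻¹ p ∈ laurentPoly
  rw [← Polynomial.aeval_subalgebra_coe p laurentPoly ⟨X⁻¹, X_inv_mem_laurentPoly⟩]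
  exact Subtype.mem _

lemma X_zpow_mem_laurentPoly (e : ℤ) : (X : RatFunc k) ^ e ∈ laurentPoly := by
  obtain ⟨n, rfl | rfl⟩ := e.eq_nat_or_neg
  · simpa using pow_mem (polyX_le_laurentPoly (X_mem_polyX (k := k))) n
  · simpa using pow_mem (X_inv_mem_laurentPoly (k := k)) n

lemma exists_eq_C_mul_X_zpow_of_mul_eq_one {f g : RatFunc k} (hf : f ∈ laurentPoly)
    (hg : g ∈ laurentPoly) (h : f * g = 1) : ∃ (c : k) (e : ℤ), c ≠ 0 ∧ f = C c * X ^ e := by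
  obtain ⟨m, hm⟩ := hf
  obtain ⟨n, hn⟩ := hg
  obtain ⟨p, hp⟩ := mem_polyX.1 hm
  obtain ⟨q, hq⟩ := mem_polyX.1 hn
  have hpq : p * q = Polynomial.X ^ (m + n) := by
    apply algebraMap_injective k
    rw [map_mul, hp, hq, map_pow, algebraMap_X]
    linear_combination (X ^ (m + n)) * h
  obtain ⟨i, -, hi⟩ := (dvd_prime_pow Polynomial.prime_X _).1 (Dvd.intro q hpq)
  obtain ⟨u, hu⟩ := hi.symm
  obtain ⟨c, hc, hcu⟩ := Polynomial.isUnit_iff.1 u.isUnit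
  have hmf : X ^ m * f = X ^ i * C c := by
    rw [← hp, ← hu, ← hcu, map_mul, map_pow, algebraMap_X, algebraMap_C]
  refine ⟨c, i - m, hc.ne_zero, ?_⟩
  rw [zpow_sub₀ X_ne_zero, zpow_natCast, zpow_natCast]
  field_simp [X_ne_zero]
  linear_combination hmf

lemma exists_eq_C_mul_X_zpow_of_mul_eq {f g : RatFunc k} (hf : f ∈ laurentPoly)
    (hg : g ∈ laurentPoly) {c : k} (hc : c ≠ 0) {e : ℤ} (h : f * g = C c * X ^ e) :
    ∃ (c' : k) (e' : ℤ), c' ≠ 0 ∧ f = C c' * X ^ e' := by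
  refine exists_eq_C_mul_X_zpow_of_mul_eq_one hf
    (mul_mem hg (mul_mem (C_mem _ c⁻¹) (X_zpow_mem_laurentPoly (-e)))) ?_
  rw [← mul_assoc, h, mul_mul_mul_comm, ← map_mul, mul_inv_cancel₀ hc, map_one,
    ← zpow_add₀ X_ne_zero, add_neg_cancel, zpow_zero, one_mul]

lemma algebraMap_eq_X_mul_add (p : k[X]) :
    algebraMap k[X] (RatFunc k) p = X * algebraMap k[X] (RatFunc k) p.divX +
      Polynomial.aeval X⁻¹ (Polynomial.C (p.coeff 0)) := by
  conv_lhs => rw [← Polynomial.X_mul_divX_add p]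
  rw [map_add, map_mul, algebraMap_X, algebraMap_C, Polynomial.aeval_C, algebraMap_eq_C]

lemma exists_X_inv_pow_mul_algebraMap_eq_X_mul_add (n : ℕ) (p : k[X]) :
    ∃ p' q' : k[X], X⁻¹ ^ n * algebraMap k[X] (RatFunc k) p =
      X * algebraMap k[X] (RatFunc k) p' + Polynomial.aeval X⁻¹ q' := by
  induction n with
  | zero => exact ⟨p.divX, _, by rw [pow_zero, one_mul, algebraMap_eq_X_mul_add p]⟩
  | succ n ih =>
    obtain ⟨p', q', h⟩ := ih
    refine ⟨p'.divX, Polynomial.C (p'.coeff 0) + Polynomial.X * q', ?_⟩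
    rw [pow_succ', mul_assoc, h, mul_add, inv_mul_cancel_left₀ X_ne_zero,
      algebraMap_eq_X_mul_add p', map_add, map_mul, Polynomial.aeval_X]
    ring

lemma exists_eq_X_mul_add_of_mem_laurentPoly {f : RatFunc k} (hf : f ∈ laurentPoly) :
    ∃ p q : k[X], f = X * algebraMap k[X] (RatFunc k) p + Polynomial.aeval X⁻¹ q := by
  obtain ⟨n, hn⟩ := hf
  obtain ⟨p, hp⟩ := mem_polyX.1 hn
  rw [show f = X⁻¹ ^ n * algebraMap k[X] (RatFunc k) p by
    rw [hp, inv_pow, inv_mul_cancel_left₀ (pow_ne_zero n X_ne_zero)]]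
  exact exists_X_inv_pow_mul_algebraMap_eq_X_mul_add n p

lemma exists_eq_X_zpow_mul_add_of_mem_laurentPoly {f : RatFunc k} (hf : f ∈ laurentPoly)
    (a : ℤ) :
    ∃ p q : k[X], f = X ^ (a + 1) * algebraMap k[X] (RatFunc k) p +
      X ^ a * Polynomial.aeval X⁻¹ q := by
  obtain ⟨p, q, h⟩ :=
    exists_eq_X_mul_add_of_mem_laurentPoly (mul_mem (X_zpow_mem_laurentPoly (-a)) hf)
  refine ⟨p, q, ?_⟩
  rw [zpow_add_one₀ X_ne_zero, mul_assoc, ← mul_add, ← h, zpow_neg,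
    mul_inv_cancel_left₀ (zpow_ne_zero a X_ne_zero)]

open Matrix

def HasBirkhoffFactorization (M : Matrix (Fin 2) (Fin 2) (RatFunc k)) : Prop :=
  ∃ (A B : Matrix (Fin 2) (Fin 2) (RatFunc k)) (e₁ e₂ : ℤ), A.IsConstDetOver polyX ∧
    B.IsConstDetOver polyXInv ∧ M = A * !![X ^ e₁, 0; 0, X ^ e₂] * B

namespace HasBirkhoffFactorization

variable {M A B : Matrix (Fin 2) (Fin 2) (RatFunc k)}

lemma diagonal (a b : ℤ) : HasBirkhoffFactorization !![(X : RatFunc k) ^ a, 0; 0, X ^ b] :=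
  ⟨1, 1, a, b, .one, .one, by simp⟩

lemma mul_left (hA : A.IsConstDetOver polyX) (hM : HasBirkhoffFactorization M) :
    HasBirkhoffFactorization (A * M) := by
  obtain ⟨A', B', e₁, e₂, hA', hB', rfl⟩ := hM
  exact ⟨A * A', B', e₁, e₂, hA.mul hA', hB', by simp only [Matrix.mul_assoc]⟩

lemma mul_right (hM : HasBirkhoffFactorization M) (hB : B.IsConstDetOver polyXInv) :
    HasBirkhoffFactorization (M * B) := by
  obtain ⟨A', B', e₁, e₂, hA', hB', rfl⟩ := hM
  exact ⟨A', B' * B, e₁, e₂, hA', hB'.mul hB, by simp only [Matrix.mul_assoc]⟩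

variable {a b : ℤ} {f g : RatFunc k}

lemma triangular_add_X_zpow_mul_of_mem_polyXInv
    (h : HasBirkhoffFactorization !![X ^ a, f; 0, X ^ b])
    (hg : g ∈ polyXInv) : HasBirkhoffFactorization !![X ^ a, f + X ^ a * g; 0, X ^ b] := by
  convert h.mul_right (isConstDetOver_unitriangular hg) using 1
  simp [add_comm]

lemma triangular_add_X_zpow_mul_of_mem_polyX
    (h : HasBirkhoffFactorization !![X ^ a, f; 0, X ^ b])
    (hg : g ∈ polyX) : HasBirkhoffFactorization !![X ^ a, f + X ^ b * g; 0, X ^ b] := by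
  convert (h.mul_left (isConstDetOver_unitriangular hg)) using 1
  simp [mul_comm]

lemma triangular_X_zpow_mul_of_isCoprime {l : ℤ} {n : ℕ} {p : k[X]}
    (hp : IsCoprime p (Polynomial.X ^ n))
    (h : ∀ g : RatFunc k, g ∈ laurentPoly →
      HasBirkhoffFactorization !![X ^ l, g; 0, X ^ (a + n)]) :
    HasBirkhoffFactorization
      !![X ^ a, X ^ l * algebraMap k[X] (RatFunc k) p; 0, X ^ (l + n)] := by
  obtain ⟨r, s, hrs⟩ := hp
  set φ := algebraMap k[X] (RatFunc k)
  have hrs' : φ r * φ p + φ s * X ^ n = 1 := by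
    simpa [φ, algebraMap_X] using congrArg φ hrs
  have hA : IsConstDetOver polyX !![φ p, -φ s; X ^ n, φ r] :=
    isConstDetOver_fin_two (algebraMap_mem_polyX p) (neg_mem (algebraMap_mem_polyX s))
      (pow_mem X_mem_polyX n) (algebraMap_mem_polyX r) one_ne_zero
      (by rw [map_one]; linear_combination hrs')
  have hB : IsConstDetOver (polyXInv (k := k)) !![0, 1; -1, 0] :=
    isConstDetOver_fin_two (zero_mem _) (one_mem _) (neg_mem (one_mem _)) (zero_mem _)
      one_ne_zero (by rw [map_one]; ring)
  have hr : -(X ^ a * φ r) ∈ laurentPoly :=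
    neg_mem (mul_mem (X_zpow_mem_laurentPoly a) (polyX_le_laurentPoly (algebraMap_mem_polyX r)))
  convert ((h _ hr).mul_left hA).mul_right hB using 1
  simp only [Matrix.mul_fin_two, zpow_add₀ (X_ne_zero (K := k)), zpow_natCast]
  ext i j
  fin_cases i <;> fin_cases j <;> simp
  · linear_combination (-X ^ a) * hrs'
  all_goals ring

end HasBirkhoffFactorization

theorem hasBirkhoffFactorization_triangular (a b : ℤ) {f : RatFunc k} (hf : f ∈ laurentPoly) :
    HasBirkhoffFactorization !![X ^ a, f; 0, X ^ b] := by
  induction hn : (b - a).natAbs using Nat.strong_induction_on generalizing a b f with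
  | _ n ih =>
  obtain ⟨p, q, rfl⟩ := exists_eq_X_zpow_mul_add_of_mem_laurentPoly hf a
  refine HasBirkhoffFactorization.triangular_add_X_zpow_mul_of_mem_polyXInv ?_
    (aeval_X_inv_mem_polyXInv q)
  obtain rfl | hp := eq_or_ne p 0
  · simpa using HasBirkhoffFactorization.diagonal a b
  obtain ⟨p', hpp', hp'⟩ := p.exists_eq_pow_rootMultiplicity_mul_and_not_dvd hp 0
  simp only [map_zero, sub_zero] at hpp' hp'
  generalize p.rootMultiplicity 0 = j at hpp'
  have hX : (X : RatFunc k) ≠ 0 := X_ne_zero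
  rw [hpp', map_mul, map_pow, algebraMap_X, ← mul_assoc, ← zpow_natCast, ← zpow_add₀ hX]
  set l := a + 1 + (j : ℤ)
  rcases le_or_gt b l with hbl | hlb
  · obtain ⟨m, hm⟩ : ∃ m : ℕ, l = b + m := ⟨(l - b).toNat, by omega⟩
    have : X ^ l * algebraMap k[X] (RatFunc k) p' =
        0 + X ^ b * (X ^ m * algebraMap k[X] (RatFunc k) p') := by
      rw [hm, zpow_add₀ hX, zpow_natCast]; ring
    rw [this]
    exact (HasBirkhoffFactorization.diagonal a b).triangular_add_X_zpow_mul_of_mem_polyX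
      (mul_mem (pow_mem X_mem_polyX m) (algebraMap_mem_polyX p'))
  · obtain ⟨m, rfl⟩ : ∃ m : ℕ, b = l + m := ⟨(b - l).toNat, by omega⟩
    refine HasBirkhoffFactorization.triangular_X_zpow_mul_of_isCoprime
      ((Polynomial.prime_X.coprime_iff_not_dvd.2 hp').symm.pow_right)
      fun g hg => ih _ ?_ _ _ hg rfl
    omega

lemma exists_isConstDetOver_polyX_mul_apply_one_zero_eq_zero
    {M : Matrix (Fin 2) (Fin 2) (RatFunc k)} (h₀ : M 0 0 ∈ laurentPoly)
    (h₁ : M 1 0 ∈ laurentPoly) :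
    ∃ A : Matrix (Fin 2) (Fin 2) (RatFunc k), A.IsConstDetOver polyX ∧ (A * M) 1 0 = 0 := by
  classical
  obtain ⟨m₀, hm₀⟩ := h₀
  obtain ⟨m₁, hm₁⟩ := h₁
  set φ := algebraMap k[X] (RatFunc k)
  obtain ⟨p, hp⟩ := mem_polyX.1 (mul_mem (pow_mem X_mem_polyX m₁) hm₀)
  obtain ⟨q, hq⟩ := mem_polyX.1 (mul_mem (pow_mem X_mem_polyX m₀) hm₁)
  obtain ⟨p₁, q₁, hp₁, hq₁, hcop⟩ := extract_gcd p q
  generalize gcd p q = d at hp₁ hq₁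
  obtain ⟨r, s, hrs⟩ := (gcd_isUnit_iff p₁ q₁).1 hcop
  have hdet : φ r * φ p₁ - φ s * -φ q₁ = algebraMap k (RatFunc k) 1 := by
    rw [map_one, ← map_one φ, ← hrs]
    simp only [map_add, map_mul]
    ring
  refine ⟨!![φ r, φ s; -φ q₁, φ p₁], isConstDetOver_fin_two (algebraMap_mem_polyX r)
    (algebraMap_mem_polyX s) (neg_mem (algebraMap_mem_polyX q₁)) (algebraMap_mem_polyX p₁)
    one_ne_zero hdet, ?_⟩
  have hX : (X : RatFunc k) ^ (m₀ + m₁) ≠ 0 := pow_ne_zero _ X_ne_zero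
  have hcol : φ p₁ * φ q - φ q₁ * φ p = 0 := by
    rw [hp₁, hq₁, map_mul, map_mul]
    ring
  rw [hp, hq] at hcol
  rw [Matrix.mul_apply, Fin.sum_univ_two]
  refine (mul_eq_zero_iff_left hX).1 ?_
  simp only [Matrix.of_apply, Matrix.cons_val', Matrix.cons_val_zero, Matrix.cons_val_one]
  linear_combination hcol

lemma hasBirkhoffFactorization_of_apply_one_zero_eq_zero {T : Matrix (Fin 2) (Fin 2) (RatFunc k)}
    (hTL : ∀ i j, T i j ∈ laurentPoly) (hT₁₀ : T 1 0 = 0) {c : k} (hc : c ≠ 0) {e : ℤ}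
    (hdetT : T.det = C c * X ^ e) : HasBirkhoffFactorization T := by
  rw [det_fin_two, hT₁₀, mul_zero, sub_zero] at hdetT
  obtain ⟨c₀, a, hc₀, hT₀₀⟩ := exists_eq_C_mul_X_zpow_of_mul_eq (hTL 0 0) (hTL 1 1) hc hdetT
  obtain ⟨c₁, b, hc₁, hT₁₁⟩ :=
    exists_eq_C_mul_X_zpow_of_mul_eq (hTL 1 1) (hTL 0 0) hc (by rw [mul_comm, hdetT])
  have hD : IsConstDetOver polyX !![C c₀, 0; 0, C c₁] :=
    isConstDetOver_fin_two (C_mem _ c₀) (zero_mem _) (zero_mem _) (C_mem _ c₁)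
      (mul_ne_zero hc₀ hc₁) (by rw [algebraMap_eq_C, map_mul]; ring)
  have hT : !![C c₀, 0; 0, C c₁] * !![X ^ a, C c₀⁻¹ * T 0 1; 0, X ^ b] = T := by
    rw [eta_fin_two T, hT₀₀, hT₁₀, hT₁₁, mul_fin_two, ← mul_assoc, ← map_mul,
      mul_inv_cancel₀ hc₀]
    simp
  rw [← hT]
  exact (hasBirkhoffFactorization_triangular a b (mul_mem (C_mem _ _) (hTL 0 1))).mul_left hD

theorem hasBirkhoffFactorization_of_mem_laurentPoly {G : Matrix (Fin 2) (Fin 2) (RatFunc k)}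
    (hG : IsUnit G.det) (hL : ∀ i j, G i j ∈ laurentPoly) (hL' : ∀ i j, G⁻¹ i j ∈ laurentPoly) :
    HasBirkhoffFactorization G := by
  obtain ⟨c, e, hc, hdetG⟩ := exists_eq_C_mul_X_zpow_of_mul_eq_one (det_mem_subalgebra hL)
    (det_mem_subalgebra hL') (by rw [← det_mul, mul_nonsing_inv _ hG, det_one])
  obtain ⟨A, hA, hAG⟩ := exists_isConstDetOver_polyX_mul_apply_one_zero_eq_zero (hL 0 0) (hL 1 0)
  obtain ⟨d, hd, hdetA⟩ := hA.2
  have hAGL : ∀ i j, (A * G) i j ∈ laurentPoly :=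
    mul_apply_mem_subalgebra (fun i j => polyX_le_laurentPoly (hA.1 i j)) hL
  have hdetAG : (A * G).det = C (d * c) * X ^ e := by
    rw [det_mul, hdetA, hdetG, algebraMap_eq_C, map_mul, mul_assoc]
  have hGAG : G = A⁻¹ * (A * G) := by
    rw [← Matrix.mul_assoc, nonsing_inv_mul _ hA.isUnit_det, Matrix.one_mul]
  rw [hGAG]
  exact (hasBirkhoffFactorization_of_apply_one_zero_eq_zero hAGL hAG (mul_ne_zero hd hc)
    hdetAG).mul_left hA.inv

end RatFunc

end

lemma memPolyX_iff {f : RatFunc ℂ} : MemPolyX f ↔ f ∈ RatFunc.polyX := by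
  rw [RatFunc.mem_polyX]
  exact exists_congr fun _ => eq_comm

lemma memPolyXInv_iff {f : RatFunc ℂ} : MemPolyXInv f ↔ f ∈ RatFunc.polyXInv :=
  exists_congr fun _ => eq_comm

lemma memLaurent_iff {f : RatFunc ℂ} : MemLaurent f ↔ f ∈ RatFunc.laurentPoly := by
  have hX : ∀ n : ℕ, (RatFunc.X : RatFunc ℂ) ^ n ≠ 0 := fun n => pow_ne_zero n RatFunc.X_ne_zero
  constructor
  · rintro ⟨p, n, rfl⟩
    refine ⟨n, ?_⟩
    rw [inv_pow, mul_inv_cancel_left₀ (hX n)]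
    exact RatFunc.algebraMap_mem_polyX p
  · rintro ⟨n, hn⟩
    obtain ⟨p, hp⟩ := RatFunc.mem_polyX.1 hn
    exact ⟨p, n, by rw [hp, inv_pow, inv_mul_cancel_left₀ (hX n)]⟩

/-- Grothendieck splitting in transition-function form.  If `G` is an
invertible `2×2` matrix over `ℂ(x)` whose entries, together with those of `G⁻¹`, are Laurent
polynomials, then there are matrices `A` (polynomial entries, constant nonzero determinant),
`B` (entries polynomial in `x⁻¹`, constant nonzero determinant) and integers `e₁, e₂` with
`A⁻¹ * G * B = !![x^e₁, 0; 0, x^e₂]`. -/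
theorem stmt7 (G : Matrix (Fin 2) (Fin 2) (RatFunc ℂ)) (hG : IsUnit G.det)
    (hGL : ∀ i j, MemLaurent (G i j)) (hGL' : ∀ i j, MemLaurent (G⁻¹ i j)) :
    ∃ (A B : Matrix (Fin 2) (Fin 2) (RatFunc ℂ)) (e₁ e₂ : ℤ),
      (∀ i j, MemPolyX (A i j)) ∧ (∃ c : ℂ, c ≠ 0 ∧ A.det = RatFunc.C c) ∧
      (∀ i j, MemPolyXInv (B i j)) ∧ (∃ c : ℂ, c ≠ 0 ∧ B.det = RatFunc.C c) ∧
      A⁻¹ * G * B = !![(RatFunc.X : RatFunc ℂ) ^ e₁, 0; 0, (RatFunc.X : RatFunc ℂ) ^ e₂] := by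
  obtain ⟨A, B, e₁, e₂, hA, hB, rfl⟩ := RatFunc.hasBirkhoffFactorization_of_mem_laurentPoly hG
    (fun i j => memLaurent_iff.1 (hGL i j)) (fun i j => memLaurent_iff.1 (hGL' i j))
  have hAu := hA.isUnit_det
  have hBu := hB.isUnit_det
  obtain ⟨hAX, c, hc, hdetA⟩ := hA
  obtain ⟨hBX, c', hc', hdetB⟩ := hB.inv
  refine ⟨A, B⁻¹, e₁, e₂, fun i j => memPolyX_iff.2 (hAX i j),
    ⟨c, hc, by rw [hdetA, RatFunc.algebraMap_eq_C]⟩, fun i j => memPolyXInv_iff.2 (hBX i j),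
    ⟨c', hc', by rw [hdetB, RatFunc.algebraMap_eq_C]⟩, ?_⟩
  simp only [← Matrix.mul_assoc]
  rw [Matrix.nonsing_inv_mul _ hAu, Matrix.one_mul, Matrix.mul_assoc, Matrix.mul_nonsing_inv _ hBu,
    Matrix.mul_one]
end

section
/- Let K be a field and b, c, x ∈ K with 4·b·c = −1 and b·x − c ≠ 0. Set A := [[c + b·x, (b·x − c)²],[1, c + b·x]]. Then for every integer n ≥ 1, Aⁿ = 2^{n−1} · [[bⁿxⁿ + cⁿ, (b·x − c)·(bⁿxⁿ − cⁿ)],[(bⁿxⁿ − cⁿ)/(b·x − c), bⁿxⁿ + cⁿ]]. -/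
/-!
With `d := b x - c`, the matrix `A` equals `!![u + v, d (u - v); (u - v) / d, u + v]` for `u := b x`
and `v := c`. Matrices of this shape act on the vectors `(d, 1)` and `(d, -1)` by `2u` and `2v`, so
multiplying two of them multiplies the parameters and contributes a factor `2`; the power formula
follows by induction and holds in every characteristic.
-/

namespace Matrix

variable {K : Type*} [Field K]

def eigenpairMatrix (d u v : K) : Matrix (Fin 2) (Fin 2) K :=
  !![u + v, d * (u - v); (u - v) / d, u + v]

theorem eigenpairMatrix_mul {d : K} (hd : d ≠ 0) (u v u' v' : K) :
    eigenpairMatrix d u v * eigenpairMatrix d u' v' =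
      (2 : K) • eigenpairMatrix d (u * u') (v * v') := by
  ext i j
  fin_cases i <;> fin_cases j <;>
    simp only [eigenpairMatrix, mul_apply, smul_apply, Fin.sum_univ_two, of_apply, cons_val',
      cons_val_zero, cons_val_one, empty_val', cons_val_fin_one,
      smul_eq_mul, Fin.zero_eta, Fin.mk_one] <;>
    field_simp <;> ring

theorem eigenpairMatrix_pow_succ {d : K} (hd : d ≠ 0) (u v : K) (n : ℕ) :
    eigenpairMatrix d u v ^ (n + 1) =
      (2 : K) ^ n • eigenpairMatrix d (u ^ (n + 1)) (v ^ (n + 1)) := by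
  induction n with
  | zero => simp
  | succ n ih =>
    rw [pow_succ, ih, smul_mul_assoc, eigenpairMatrix_mul hd, smul_smul, ← pow_succ, ← pow_succ,
      ← pow_succ]

end Matrix

open Matrix in
theorem stmt10_general {K : Type*} [Field K] (b c x : K)
    (hx : b * x - c ≠ 0) (n : ℕ) (hn : 1 ≤ n) :
    (!![c + b * x, (b * x - c) ^ 2; 1, c + b * x] : Matrix (Fin 2) (Fin 2) K) ^ n
      = ((2 : K) ^ (n - 1)) •
        !![b ^ n * x ^ n + c ^ n, (b * x - c) * (b ^ n * x ^ n - c ^ n);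
           (b ^ n * x ^ n - c ^ n) / (b * x - c), b ^ n * x ^ n + c ^ n] := by
  have hA : (!![c + b * x, (b * x - c) ^ 2; 1, c + b * x] : Matrix (Fin 2) (Fin 2) K)
      = eigenpairMatrix (b * x - c) (b * x) c := by
    rw [eigenpairMatrix, div_self hx, add_comm c, sq]
  obtain ⟨m, rfl⟩ := Nat.exists_eq_add_of_le' hn
  rw [hA, eigenpairMatrix_pow_succ hx, Nat.add_sub_cancel, eigenpairMatrix, mul_pow]

/-- matrix power formula from the proof of Proposition 7.1.  Over a field
`K`, if `4bc = −1` and `bx − c ≠ 0`, then for `A := !![c + bx, (bx − c)²; 1, c + bx]` and every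
`n ≥ 1`,
`Aⁿ = 2^{n−1} • !![bⁿxⁿ + cⁿ, (bx − c)(bⁿxⁿ − cⁿ); (bⁿxⁿ − cⁿ)/(bx − c), bⁿxⁿ + cⁿ]`. -/
theorem stmt10 {K : Type*} [Field K] (b c x : K) (h : 4 * b * c = -1)
    (hx : b * x - c ≠ 0) (n : ℕ) (hn : 1 ≤ n) :
    (!![c + b * x, (b * x - c) ^ 2; 1, c + b * x] : Matrix (Fin 2) (Fin 2) K) ^ n
      = ((2 : K) ^ (n - 1)) •
        !![b ^ n * x ^ n + c ^ n, (b * x - c) * (b ^ n * x ^ n - c ^ n);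
           (b ^ n * x ^ n - c ^ n) / (b * x - c), b ^ n * x ^ n + c ^ n] :=
  stmt10_general b c x hx n hn
end
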